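/- arXiv:1512.02837 — 7 statements merged into one kernel-verified Lean document; each statement's English description precedes it below -/
import Mathlib

section
/- Let u ∈ V and let (u_h, z_h) ∈ V_h × W_h satisfy the consistent discrete system: a_h(u_h, w) − s_W(z_h, w) = a_h(u, w) for all w ∈ W_h, and a_h(v, z_h) + s_V(u_h, v) = s_V(u, v) for all v ∈ V_h. Let i_V u ∈ V_h be given and set ρ := |(u − i_V u, 0)|_L. Assume: (inf-sup stability) there is c_s > 0 such that for every (ν, ζ) ∈ V_h × W_h there exists (v, w) ∈ V_h × W_h with |(v, w)|_L ≤ 1 and c_s·|(ν, ζ)|_L ≤ A_h[(ν, ζ), (v, w)]; (continuity) there is δ ≥ 0 such that a_h(u − i_V u, w) ≤ δ·|(0, w)|_L for all w ∈ W_h; (domination) there is C₁ ≥ 0 with |u − i_V u|_{s_V} ≤ C₁·ρ and |v|_{s_V} ≤ C₁·|(v, w)|_L for all (v, w) ∈ V_h × W_h. Then |(u_h − u, z_h)|_L ≤ ρ + c_s^{-1}·(δ + C₁²·ρ). In particular, if δ + ρ ≤ C_V·h^t for constants C_V ≥ 0, h > 0 and t ≥ 1, then |(u_h − u, z_h)|_L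 ≤ max(1, C₁²)·(1 + c_s^{-1})·C_V·h^t. -/
/-!
The discrete error `(u_h - i_V u, z_h)` lies in `V_h × W_h`, so inf-sup stability bounds `c_s` times
its `L`-seminorm by its saddle-point pairing with a unit test pair `(v, w)`. By consistency that
pairing equals `a_h(u - i_V u, w) + s_V(u - i_V u, v)`, which continuity and the Cauchy–Schwarz
inequality for `s_V` together with domination bound by `δ + C₁² ρ`. The triangle inequality adds
the interpolation error `ρ`.
-/

lemma LinearMap.BilinForm.apply_le_sqrt_mul_sqrt {M : Type*} [AddCommGroup M] [Module ℝ M]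
    (B : LinearMap.BilinForm ℝ M) (hsymm : ∀ x y, B x y = B y x) (hpos : ∀ x, 0 ≤ B x x)
    (x y : M) : B x y ≤ √(B x x) * √(B y y) := by
  rw [← Real.sqrt_mul (hpos x)]
  refine Real.le_sqrt_of_sq_le ?_
  have hcs := B.apply_mul_apply_le_of_forall_zero_le hpos x y
  rwa [hsymm y x, ← sq] at hcs

lemma Seminorm.map_sub_prod_le {V W : Type*} [AddCommGroup V] [Module ℝ V]
    [AddCommGroup W] [Module ℝ W] (p : Seminorm ℝ (V × W)) (a b c : V) (z : W) :
    p (a - c, z) ≤ p (a - b, z) + p (c - b, 0) := by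
  have hsplit : ((a - c, z) : V × W) = (a - b, z) - (c - b, 0) := by
    simp only [Prod.mk_sub_mk, sub_sub_sub_cancel_right, sub_zero]
  rw [hsplit]
  exact map_sub_le_add p _ _

section SaddlePoint

variable {V W : Type*} [AddCommGroup V] [Module ℝ V] [AddCommGroup W] [Module ℝ W]
  (ah : V →ₗ[ℝ] W →ₗ[ℝ] ℝ) (sV : V →ₗ[ℝ] V →ₗ[ℝ] ℝ) (sW : W →ₗ[ℝ] W →ₗ[ℝ] ℝ)

def saddleForm (x y : V × W) : ℝ :=
  ah x.1 y.2 - sW x.2 y.2 + ah y.1 x.2 + sV x.1 y.1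

lemma saddleForm_discreteError_eq {Vh : Submodule ℝ V} {Wh : Submodule ℝ W}
    {u uh iVu : V} {zh : W}
    (heq1 : ∀ w ∈ Wh, ah uh w - sW zh w = ah u w)
    (heq2 : ∀ v ∈ Vh, ah v zh + sV uh v = sV u v) {v : V} (hv : v ∈ Vh) {w : W} (hw : w ∈ Wh) :
    saddleForm ah sV sW (uh - iVu, zh) (v, w) = ah (u - iVu) w + sV (u - iVu) v := by
  simp only [saddleForm, map_sub, LinearMap.sub_apply]
  linarith [heq1 w hw, heq2 v hv]

lemma consistencyError_le {Vh : Submodule ℝ V} {Wh : Submodule ℝ W} (L : Seminorm ℝ (V × W))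
    (hsVsymm : ∀ v₁ v₂ : V, sV v₁ v₂ = sV v₂ v₁) (hsVpos : ∀ v : V, 0 ≤ sV v v)
    (hL₂ : ∀ (v : V) (w : W), L (0, w) ≤ L (v, w)) {e : V} {δ C₁ : ℝ} (hδ : 0 ≤ δ)
    (hcont : ∀ w ∈ Wh, ah e w ≤ δ * L (0, w))
    (hdom1 : √(sV e e) ≤ C₁ * L (e, 0))
    (hdom2 : ∀ v ∈ Vh, ∀ w ∈ Wh, √(sV v v) ≤ C₁ * L (v, w))
    {v : V} (hv : v ∈ Vh) {w : W} (hw : w ∈ Wh) (hvw : L (v, w) ≤ 1) :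
    ah e w + sV e v ≤ δ + C₁ ^ 2 * L (e, 0) := by
  have hah : ah e w ≤ δ := calc
    ah e w ≤ δ * L (0, w) := hcont w hw
    _ ≤ δ * 1 := mul_le_mul_of_nonneg_left ((hL₂ v w).trans hvw) hδ
    _ = δ := mul_one δ
  have hCρ : 0 ≤ C₁ ^ 2 * L (e, 0) := mul_nonneg (sq_nonneg C₁) (apply_nonneg L _)
  have hsV : sV e v ≤ C₁ ^ 2 * L (e, 0) := calc
    sV e v ≤ √(sV e e) * √(sV v v) :=
      LinearMap.BilinForm.apply_le_sqrt_mul_sqrt sV hsVsymm hsVpos e v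
    _ ≤ (C₁ * L (e, 0)) * (C₁ * L (v, w)) :=
      mul_le_mul hdom1 (hdom2 v hv w hw) (Real.sqrt_nonneg _) ((Real.sqrt_nonneg _).trans hdom1)
    _ = C₁ ^ 2 * L (e, 0) * L (v, w) := by ring
    _ ≤ C₁ ^ 2 * L (e, 0) := mul_le_of_le_one_right hCρ hvw
  linarith

end SaddlePoint

lemma add_mul_add_sq_mul_le_max_mul {ρ δ k C X : ℝ} (hρ : 0 ≤ ρ) (hδ : 0 ≤ δ) (hk : 0 ≤ k)
    (hX : δ + ρ ≤ X) : ρ + k * (δ + C ^ 2 * ρ) ≤ max 1 (C ^ 2) * (1 + k) * X := by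
  have hM₁ : 1 ≤ max 1 (C ^ 2) := le_max_left _ _
  have hM₂ : C ^ 2 ≤ max 1 (C ^ 2) := le_max_right _ _
  have hρX : ρ ≤ max 1 (C ^ 2) * X := by nlinarith
  have hrest : δ + C ^ 2 * ρ ≤ max 1 (C ^ 2) * X := by nlinarith
  nlinarith [mul_le_mul_of_nonneg_left hrest hk]

theorem stabilisation_norm_convergence_general
    {V W : Type*} [NormedAddCommGroup V] [NormedSpace ℝ V]
    [NormedAddCommGroup W] [NormedSpace ℝ W]
    (Vh : Submodule ℝ V) (Wh : Submodule ℝ W)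
    (ah : V →ₗ[ℝ] W →ₗ[ℝ] ℝ)
    (sV : V →ₗ[ℝ] V →ₗ[ℝ] ℝ) (sW : W →ₗ[ℝ] W →ₗ[ℝ] ℝ)
    (hsVsymm : ∀ v₁ v₂ : V, sV v₁ v₂ = sV v₂ v₁)
    (hsVpos : ∀ v : V, 0 ≤ sV v v)
    (L : Seminorm ℝ (V × W))
    (hL₂ : ∀ (v : V) (w : W), L ((0 : V), w) ≤ L (v, w))
    (u : V) (uh : V) (zh : W) (huh : uh ∈ Vh) (hzh : zh ∈ Wh)
    -- the consistent discrete system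
    (heq1 : ∀ w ∈ Wh, ah uh w - sW zh w = ah u w)
    (heq2 : ∀ v ∈ Vh, ah v zh + sV uh v = sV u v)
    (iVu : V) (hiVu : iVu ∈ Vh)
    (ρ : ℝ) (hρ : ρ = L (u - iVu, (0 : W)))
    -- inf-sup stability
    (cs : ℝ) (hcs : 0 < cs)
    (hinfsup : ∀ ν ∈ Vh, ∀ ζ ∈ Wh, ∃ v ∈ Vh, ∃ w ∈ Wh,
      L (v, w) ≤ 1 ∧ cs * L (ν, ζ) ≤ ah ν w - sW ζ w + ah v ζ + sV ν v)
    -- continuity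
    (δ : ℝ) (hδ : 0 ≤ δ)
    (hcont : ∀ w ∈ Wh, ah (u - iVu) w ≤ δ * L ((0 : V), w))
    -- domination
    (C₁ : ℝ)
    (hdom1 : Real.sqrt (sV (u - iVu) (u - iVu)) ≤ C₁ * ρ)
    (hdom2 : ∀ v ∈ Vh, ∀ w ∈ Wh, Real.sqrt (sV v v) ≤ C₁ * L (v, w)) :
    L (uh - u, zh) ≤ ρ + cs⁻¹ * (δ + C₁ ^ 2 * ρ) ∧
      ∀ CV h t : ℝ, 0 ≤ CV → 0 < h → 1 ≤ t → δ + ρ ≤ CV * h ^ t →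
        L (uh - u, zh) ≤ max 1 (C₁ ^ 2) * (1 + cs⁻¹) * CV * h ^ t := by
  subst hρ
  obtain ⟨v, hv, w, hw, hvw, hstab⟩ := hinfsup (uh - iVu) (Vh.sub_mem huh hiVu) zh hzh
  have hdiscrete : cs * L (uh - iVu, zh) ≤ δ + C₁ ^ 2 * L (u - iVu, 0) := by
    calc cs * L (uh - iVu, zh) ≤ saddleForm ah sV sW (uh - iVu, zh) (v, w) := hstab
      _ = ah (u - iVu) w + sV (u - iVu) v := saddleForm_discreteError_eq ah sV sW heq1 heq2 hv hw
      _ ≤ δ + C₁ ^ 2 * L (u - iVu, 0) :=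
        consistencyError_le ah sV L hsVsymm hsVpos hL₂ hδ hcont hdom1 hdom2 hv hw hvw
  have herror : L (uh - u, zh) ≤ L (u - iVu, 0) + cs⁻¹ * (δ + C₁ ^ 2 * L (u - iVu, 0)) := by
    have := L.map_sub_prod_le uh iVu u zh
    have := (le_inv_mul_iff₀ hcs).mpr hdiscrete
    linarith
  refine ⟨herror, fun CV h t _ _ _ happrox => ?_⟩
  rw [mul_assoc _ CV]
  exact herror.trans (add_mul_add_sq_mul_le_max_mul (apply_nonneg L _) hδ
    (inv_nonneg.mpr hcs.le) happrox)

/-- Stabilisation-norm convergence (Lemma 1 of the paper, abstract form):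
under consistency, inf-sup stability, continuity and domination hypotheses,
the error in the stabilisation seminorm is bounded by `ρ + cs⁻¹ (δ + C₁² ρ)`,
and in particular by `max 1 C₁² (1 + cs⁻¹) C_V h^t` under approximability. -/
theorem stabilisation_norm_convergence
    {V W : Type*} [NormedAddCommGroup V] [NormedSpace ℝ V]
    [NormedAddCommGroup W] [NormedSpace ℝ W]
    (Vh : Submodule ℝ V) (Wh : Submodule ℝ W)
    (ah : V →ₗ[ℝ] W →ₗ[ℝ] ℝ)
    (sV : V →ₗ[ℝ] V →ₗ[ℝ] ℝ) (sW : W →ₗ[ℝ] W →ₗ[ℝ] ℝ)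
    (hsVsymm : ∀ v₁ v₂ : V, sV v₁ v₂ = sV v₂ v₁)
    (hsVpos : ∀ v : V, 0 ≤ sV v v)
    (hsWsymm : ∀ w₁ w₂ : W, sW w₁ w₂ = sW w₂ w₁)
    (hsWpos : ∀ w : W, 0 ≤ sW w w)
    (L : Seminorm ℝ (V × W))
    (hL₁ : ∀ (v : V) (w : W), L (v, (0 : W)) ≤ L (v, w))
    (hL₂ : ∀ (v : V) (w : W), L ((0 : V), w) ≤ L (v, w))
    (u : V) (uh : V) (zh : W) (huh : uh ∈ Vh) (hzh : zh ∈ Wh)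
    -- the consistent discrete system
    (heq1 : ∀ w ∈ Wh, ah uh w - sW zh w = ah u w)
    (heq2 : ∀ v ∈ Vh, ah v zh + sV uh v = sV u v)
    (iVu : V) (hiVu : iVu ∈ Vh)
    (ρ : ℝ) (hρ : ρ = L (u - iVu, (0 : W)))
    -- inf-sup stability
    (cs : ℝ) (hcs : 0 < cs)
    (hinfsup : ∀ ν ∈ Vh, ∀ ζ ∈ Wh, ∃ v ∈ Vh, ∃ w ∈ Wh,
      L (v, w) ≤ 1 ∧ cs * L (ν, ζ) ≤ ah ν w - sW ζ w + ah v ζ + sV ν v)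
    -- continuity
    (δ : ℝ) (hδ : 0 ≤ δ)
    (hcont : ∀ w ∈ Wh, ah (u - iVu) w ≤ δ * L ((0 : V), w))
    -- domination
    (C₁ : ℝ) (hC₁ : 0 ≤ C₁)
    (hdom1 : Real.sqrt (sV (u - iVu) (u - iVu)) ≤ C₁ * ρ)
    (hdom2 : ∀ v ∈ Vh, ∀ w ∈ Wh, Real.sqrt (sV v v) ≤ C₁ * L (v, w)) :
    L (uh - u, zh) ≤ ρ + cs⁻¹ * (δ + C₁ ^ 2 * ρ) ∧
      ∀ CV h t : ℝ, 0 ≤ CV → 0 < h → 1 ≤ t → δ + ρ ≤ CV * h ^ t →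
        L (uh - u, zh) ≤ max 1 (C₁ ^ 2) * (1 + cs⁻¹) * CV * h ^ t :=
  stabilisation_norm_convergence_general Vh Wh ah sV sW hsVsymm hsVpos L hL₂ u uh zh huh hzh heq1
    heq2 iVu hiVu ρ hρ cs hcs hinfsup δ hδ hcont C₁ hdom1 hdom2
end

section
/- Let a : V × W → ℝ be a bilinear form and l, l_h : W → ℝ linear functionals with l(w) = l_h(w) for all w ∈ W_h (unperturbed data). Let u ∈ V satisfy a(u, w) = l(w) for all w ∈ W, let (u_h, z_h) ∈ V_h × W_h satisfy a_h(u_h, w) − s_W(z_h, w) = l_h(w) for all w ∈ W_h, let i_W : W → W be a linear map with i_W w ∈ W_h for all w ∈ W, and let e_h ∈ V. Assume there are constants K₁, K₂, K₃, C_W ≥ 0 and a number η_V ≥ 0 such that for all w ∈ W: |a(u − u_h, w − i_W w)| ≤ K₁·η_V·‖w‖_W, |a_h(u_h, i_W w) − a(u_h, i_W w)| ≤ K₂·η_V·‖w‖_W, |a(e_h, w)| ≤ K₃·η_V·‖w‖_W, and |i_W w|_{s_W} ≤ C_W·‖w‖_W. Then, with η := η_V + |z_h|_{s_W} and c_a :=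 K₁ + K₂ + K₃ + C_W, the residual bound |l(w) − a(u_h, w) − a(e_h, w)| ≤ c_a·η·‖w‖_W holds for all w ∈ W. -/
/-- Cauchy–Schwarz for a symmetric positive semidefinite bilinear form. -/
lemma cs_psd {W : Type*} [AddCommGroup W] [Module ℝ W]
    (sW : W →ₗ[ℝ] W →ₗ[ℝ] ℝ)
    (hsymm : ∀ w₁ w₂ : W, sW w₁ w₂ = sW w₂ w₁)
    (hpos : ∀ w : W, 0 ≤ sW w w) (x y : W) :
    |sW x y| ≤ Real.sqrt (sW x x) * Real.sqrt (sW y y) := by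
  have key : (sW x y) ^ 2 ≤ sW x x * sW y y := by
    have h : ∀ t : ℝ, 0 ≤ sW y y * (t * t) + (2 * sW x y) * t + sW x x := by
      intro t
      have h0 := hpos (x + t • y)
      simp only [map_add, map_smul, LinearMap.add_apply, LinearMap.smul_apply,
        smul_eq_mul] at h0
      rw [hsymm y x] at h0
      nlinarith [h0]
    have hd := discrim_le_zero h
    rw [discrim] at hd
    nlinarith [hd]
  calc |sW x y| = Real.sqrt ((sW x y) ^ 2) := (Real.sqrt_sq_eq_abs _).symm
    _ ≤ Real.sqrt (sW x x * sW y y) := Real.sqrt_le_sqrt key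
    _ = Real.sqrt (sW x x) * Real.sqrt (sW y y) := Real.sqrt_mul (hpos x) _

/-- Residual bound: in the unperturbed case, the Strang-type terms bound the
weak residual by `c_a · η · ‖w‖_W` with `η := η_V + |z_h|_{s_W}` and
`c_a := K₁ + K₂ + K₃ + C_W`. -/
theorem residual_bound_unperturbed
    {V W : Type*} [NormedAddCommGroup V] [NormedSpace ℝ V]
    [NormedAddCommGroup W] [NormedSpace ℝ W]
    (Vh : Submodule ℝ V) (Wh : Submodule ℝ W)
    (a : V →ₗ[ℝ] W →ₗ[ℝ] ℝ) (ah : V →ₗ[ℝ] W →ₗ[ℝ] ℝ)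
    (sW : W →ₗ[ℝ] W →ₗ[ℝ] ℝ)
    (hsWsymm : ∀ w₁ w₂ : W, sW w₁ w₂ = sW w₂ w₁)
    (hsWpos : ∀ w : W, 0 ≤ sW w w)
    (l lh : W →ₗ[ℝ] ℝ)
    -- unperturbed data
    (hunpert : ∀ w ∈ Wh, l w = lh w)
    (u : V) (hu : ∀ w : W, a u w = l w)
    (uh : V) (zh : W) (huh : uh ∈ Vh) (hzh : zh ∈ Wh)
    (heq1 : ∀ w ∈ Wh, ah uh w - sW zh w = lh w)
    (iW : W →ₗ[ℝ] W) (hiW : ∀ w : W, iW w ∈ Wh)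
    (eh : V)
    (K₁ K₂ K₃ CW : ℝ) (hK₁ : 0 ≤ K₁) (hK₂ : 0 ≤ K₂) (hK₃ : 0 ≤ K₃)
    (hCW : 0 ≤ CW)
    (ηV : ℝ) (hηV : 0 ≤ ηV)
    (hb1 : ∀ w : W, |a (u - uh) (w - iW w)| ≤ K₁ * ηV * ‖w‖)
    (hb2 : ∀ w : W, |ah uh (iW w) - a uh (iW w)| ≤ K₂ * ηV * ‖w‖)
    (hb3 : ∀ w : W, |a eh w| ≤ K₃ * ηV * ‖w‖)
    (hb4 : ∀ w : W, Real.sqrt (sW (iW w) (iW w)) ≤ CW * ‖w‖) :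
    ∀ w : W,
      |l w - a uh w - a eh w| ≤
        (K₁ + K₂ + K₃ + CW) * (ηV + Real.sqrt (sW zh zh)) * ‖w‖ := by
  intro w
  -- key identity
  have hiww := hiW w
  have hgal : a u (iW w) = ah uh (iW w) - sW zh (iW w) := by
    rw [hu (iW w), hunpert _ hiww, heq1 _ hiww]
  have hdecomp : l w - a uh w - a eh w =
      a (u - uh) (w - iW w) + (ah uh (iW w) - a uh (iW w))
        - sW zh (iW w) - a eh w := by
    have h1 : a (u - uh) (w - iW w)
        = a u w - a uh w - a u (iW w) + a uh (iW w) := by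
      simp only [map_sub, LinearMap.sub_apply]; ring
    rw [h1, hu w, hgal]; ring
  -- bound sW term
  have hs : |sW zh (iW w)| ≤ Real.sqrt (sW zh zh) * (CW * ‖w‖) := by
    calc |sW zh (iW w)| ≤ Real.sqrt (sW zh zh) * Real.sqrt (sW (iW w) (iW w)) :=
          cs_psd sW hsWsymm hsWpos zh (iW w)
      _ ≤ Real.sqrt (sW zh zh) * (CW * ‖w‖) := by
          exact mul_le_mul_of_nonneg_left (hb4 w) (Real.sqrt_nonneg _)
  have h1 := hb1 w
  have h2 := hb2 w
  have h3 := hb3 w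
  have hsq : 0 ≤ Real.sqrt (sW zh zh) := Real.sqrt_nonneg _
  have hnw : 0 ≤ ‖w‖ := norm_nonneg w
  calc |l w - a uh w - a eh w|
      ≤ |a (u - uh) (w - iW w)| + |ah uh (iW w) - a uh (iW w)|
        + |sW zh (iW w)| + |a eh w| := by
        rw [hdecomp]
        have := abs_sub (a (u - uh) (w - iW w) + (ah uh (iW w) - a uh (iW w))
          - sW zh (iW w)) (a eh w)
        have := abs_sub (a (u - uh) (w - iW w) + (ah uh (iW w) - a uh (iW w)))
          (sW zh (iW w))
        have := abs_add_le (a (u - uh) (w - iW w)) (ah uh (iW w) - a uh (iW w))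
        calc |a (u - uh) (w - iW w) + (ah uh (iW w) - a uh (iW w))
              - sW zh (iW w) - a eh w|
            ≤ |a (u - uh) (w - iW w) + (ah uh (iW w) - a uh (iW w))
              - sW zh (iW w)| + |a eh w| := abs_sub _ _
          _ ≤ |a (u - uh) (w - iW w) + (ah uh (iW w) - a uh (iW w))|
              + |sW zh (iW w)| + |a eh w| :=
              add_le_add (abs_sub _ _) le_rfl
          _ ≤ |a (u - uh) (w - iW w)| + |ah uh (iW w) - a uh (iW w)|
              + |sW zh (iW w)| + |a eh w| :=
              add_le_add (add_le_add (abs_add_le _ _) le_rfl) le_rfl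
    _ ≤ K₁ * ηV * ‖w‖ + K₂ * ηV * ‖w‖ + Real.sqrt (sW zh zh) * (CW * ‖w‖)
        + K₃ * ηV * ‖w‖ := by gcongr
    _ ≤ (K₁ + K₂ + K₃ + CW) * (ηV + Real.sqrt (sW zh zh)) * ‖w‖ := by
        nlinarith [mul_nonneg hK₁ hsq, mul_nonneg hK₂ hsq, mul_nonneg hK₃ hsq,
          mul_nonneg hCW hηV, mul_nonneg (mul_nonneg hK₁ hsq) hnw,
          mul_nonneg (mul_nonneg hK₂ hsq) hnw, mul_nonneg (mul_nonneg hK₃ hsq) hnw,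
          mul_nonneg (mul_nonneg hCW hηV) hnw]
end

section
/- Let u ∈ V₀ satisfy a(u, w) = l(w) for all w ∈ W, where l : W → ℝ is linear. Let u_h ∈ V_h, let r_V u_h ∈ V₀ be given, and set ẽ := u − r_V u_h and e_h := r_V u_h − u_h. Assume: ‖ẽ‖_C ≤ E; there are constants c_a ≥ 0, η ≥ 0, K₄ ≥ 0 and η_V ≥ 0 such that |l(w) − a(u_h, w) − a(e_h, w)| ≤ c_a·η·‖w‖_W for all w ∈ W, c_a·η < 1, and ‖e_h‖_S ≤ K₄·η_V. Then the a posteriori error estimate ‖u − u_h‖_S ≤ Ξ(c_a·η) + K₄·η_V holds. -/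
/-- A posteriori error estimate using conditional stability (Theorem 1 of the
paper, abstract form): if the residual of the conforming part of the error is
small and the stability condition is satisfied, then
`‖u − u_h‖_S ≤ Ξ(c_a·η) + K₄·η_V`. -/
theorem aposteriori_error_estimate
    {V W : Type*} [NormedAddCommGroup V] [NormedSpace ℝ V]
    [NormedAddCommGroup W] [NormedSpace ℝ W]
    (Vh : Submodule ℝ V) (V₀ : Submodule ℝ V)
    (a : V →ₗ[ℝ] W →ₗ[ℝ] ℝ)
    -- conditional stability in the seminorms S and C
    (S C : Seminorm ℝ V) (E : ℝ) (hE : 0 ≤ E) (Ξ : ℝ → ℝ)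
    (hstab : ∀ x ∈ V₀, C x ≤ E → ∀ ε : ℝ, 0 ≤ ε → ε < 1 →
      (∀ w : W, |a x w| ≤ ε * ‖w‖) → S x ≤ Ξ ε)
    (l : W →ₗ[ℝ] ℝ)
    (u : V) (hu₀ : u ∈ V₀) (hu : ∀ w : W, a u w = l w)
    (uh : V) (huh : uh ∈ Vh)
    (rVuh : V) (hrVuh : rVuh ∈ V₀)
    -- the conforming part of the error satisfies the stability condition
    (hcond : C (u - rVuh) ≤ E)
    (ca η K₄ ηV : ℝ) (hca : 0 ≤ ca) (hη : 0 ≤ η) (hK₄ : 0 ≤ K₄) (hηV : 0 ≤ ηV)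
    (hres : ∀ w : W, |l w - a uh w - a (rVuh - uh) w| ≤ ca * η * ‖w‖)
    (hsmall : ca * η < 1)
    (heh : S (rVuh - uh) ≤ K₄ * ηV) :
    S (u - uh) ≤ Ξ (ca * η) + K₄ * ηV := by
  have hstab' : S (u - rVuh) ≤ Ξ (ca * η) := by
    apply hstab _ (V₀.sub_mem hu₀ hrVuh) hcond _ (mul_nonneg hca hη) hsmall
    intro w
    have := hres w
    simp only [map_sub, LinearMap.sub_apply] at this ⊢
    rw [hu w]
    convert this using 2
    ring
  calc S (u - uh) = S ((u - rVuh) + (rVuh - uh)) := by rw [sub_add_sub_cancel]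
    _ ≤ S (u - rVuh) + S (rVuh - uh) := map_add_le_add S _ _
    _ ≤ Ξ (ca * η) + K₄ * ηV := add_le_add hstab' heh
end

section
/- Let u ∈ V and let (u_h, z_h) ∈ V_h × W_h satisfy the perturbed discrete system: a_h(u_h, w) − s_W(z_h, w) = a_h(u, w) + δl(w) for all w ∈ W_h, and a_h(v, z_h) + s_V(u_h, v) = s_V(u, v) + δs(v) for all v ∈ V_h, where δl : W → ℝ and δs : V → ℝ are linear (the data perturbations). Let i_V u ∈ V_h be given and set ρ := |(u − i_V u, 0)|_L. Assume: (inf-sup stability) there is c_s > 0 such that for every (ν, ζ) ∈ V_h × W_h there exists (v, w) ∈ V_h × W_h with |(v, w)|_L ≤ 1 and c_s·|(ν, ζ)|_L ≤ A_h[(ν, ζ), (v, w)]; (continuity) a_h(u − i_V u, w) ≤ δ·|(0, w)|_L for all w ∈ W_h with δ ≥ 0; (domination) |u − i_V u|_{s_V} ≤ C₁·ρ and |v|_{s_V} ≤ C₁·|(v, w)|_L for all (v, w) ∈ V_h × W_h; (perturbation bounds) |δl(w)| ≤ D_l·‖w‖_W for all w ∈ W_h, ‖w‖_W ≤ C_κ·h^{−κ}·|(0,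 w)|_L for all w ∈ W_h (with constants C_κ ≥ 0, h > 0, κ ≥ 0), and |δs(v)| ≤ h^{1/2}·D_ψ·|v|_{s_V} for all v ∈ V_h. Then |(u_h − u, z_h)|_L ≤ ρ + c_s^{-1}·(δ + C₁²·ρ + C_κ·h^{−κ}·D_l + C₁·h^{1/2}·D_ψ). -/
/-- Perturbed stabilisation-norm convergence (Lemma 2 of the paper, abstract
form): with data perturbations `δl` and `δs`, the error in the stabilisation
seminorm is bounded by
`ρ + cs⁻¹ (δ + C₁² ρ + C_κ h^{-κ} D_l + C₁ h^{1/2} D_ψ)`. -/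
theorem perturbed_stabilisation_norm_convergence
    {V W : Type*} [NormedAddCommGroup V] [NormedSpace ℝ V]
    [NormedAddCommGroup W] [NormedSpace ℝ W]
    (Vh : Submodule ℝ V) (Wh : Submodule ℝ W)
    (ah : V →ₗ[ℝ] W →ₗ[ℝ] ℝ)
    (sV : V →ₗ[ℝ] V →ₗ[ℝ] ℝ) (sW : W →ₗ[ℝ] W →ₗ[ℝ] ℝ)
    (hsVsymm : ∀ v₁ v₂ : V, sV v₁ v₂ = sV v₂ v₁)
    (hsVpos : ∀ v : V, 0 ≤ sV v v)
    (hsWsymm : ∀ w₁ w₂ : W, sW w₁ w₂ = sW w₂ w₁)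
    (hsWpos : ∀ w : W, 0 ≤ sW w w)
    (L : Seminorm ℝ (V × W))
    (hL₁ : ∀ (v : V) (w : W), L (v, (0 : W)) ≤ L (v, w))
    (hL₂ : ∀ (v : V) (w : W), L ((0 : V), w) ≤ L (v, w))
    -- data perturbations
    (δl : W →ₗ[ℝ] ℝ) (δs : V →ₗ[ℝ] ℝ)
    (u : V) (uh : V) (zh : W) (huh : uh ∈ Vh) (hzh : zh ∈ Wh)
    -- the perturbed discrete system
    (heq1 : ∀ w ∈ Wh, ah uh w - sW zh w = ah u w + δl w)
    (heq2 : ∀ v ∈ Vh, ah v zh + sV uh v = sV u v + δs v)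
    (iVu : V) (hiVu : iVu ∈ Vh)
    (ρ : ℝ) (hρ : ρ = L (u - iVu, (0 : W)))
    -- inf-sup stability
    (cs : ℝ) (hcs : 0 < cs)
    (hinfsup : ∀ ν ∈ Vh, ∀ ζ ∈ Wh, ∃ v ∈ Vh, ∃ w ∈ Wh,
      L (v, w) ≤ 1 ∧ cs * L (ν, ζ) ≤ ah ν w - sW ζ w + ah v ζ + sV ν v)
    -- continuity
    (δ : ℝ) (hδ : 0 ≤ δ)
    (hcont : ∀ w ∈ Wh, ah (u - iVu) w ≤ δ * L ((0 : V), w))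
    -- domination
    (C₁ : ℝ) (hC₁ : 0 ≤ C₁)
    (hdom1 : Real.sqrt (sV (u - iVu) (u - iVu)) ≤ C₁ * ρ)
    (hdom2 : ∀ v ∈ Vh, ∀ w ∈ Wh, Real.sqrt (sV v v) ≤ C₁ * L (v, w))
    -- perturbation bounds
    (Dl Dψ Cκ κ h : ℝ) (hDl : 0 ≤ Dl) (hDψ : 0 ≤ Dψ) (hCκ : 0 ≤ Cκ)
    (hκ : 0 ≤ κ) (hh : 0 < h)
    (hδl : ∀ w ∈ Wh, |δl w| ≤ Dl * ‖w‖)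
    (hWnorm : ∀ w ∈ Wh, ‖w‖ ≤ Cκ * h ^ (-κ) * L ((0 : V), w))
    (hδs : ∀ v ∈ Vh, |δs v| ≤ h ^ ((1 : ℝ) / 2) * Dψ * Real.sqrt (sV v v)) :
    L (uh - u, zh) ≤
      ρ + cs⁻¹ * (δ + C₁ ^ 2 * ρ + Cκ * h ^ (-κ) * Dl +
        C₁ * h ^ ((1 : ℝ) / 2) * Dψ) := by

  -- Cauchy–Schwarz for the semidefinite form sV
  have csV : ∀ a b : V, sV a b ≤ Real.sqrt (sV a a) * Real.sqrt (sV b b) := by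
    intro a b
    have hdisc : discrim (sV b b) (2 * sV a b) (sV a a) ≤ 0 := by
      apply discrim_le_zero
      intro t
      have hpos := hsVpos (a + t • b)
      have hsym := hsVsymm b a
      simp only [map_add, map_smul, LinearMap.add_apply, LinearMap.smul_apply,
        smul_eq_mul] at hpos
      rw [hsym] at hpos
      nlinarith [hpos]
    have hsq : (sV a b) ^ 2 ≤ sV a a * sV b b := by
      rw [discrim] at hdisc; nlinarith [hdisc]
    calc sV a b ≤ |sV a b| := le_abs_self _
      _ = Real.sqrt ((sV a b) ^ 2) := (Real.sqrt_sq_eq_abs _).symm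
      _ ≤ Real.sqrt (sV a a * sV b b) := Real.sqrt_le_sqrt hsq
      _ = Real.sqrt (sV a a) * Real.sqrt (sV b b) := Real.sqrt_mul (hsVpos a) _
  set e := uh - iVu with he
  have heVh : e ∈ Vh := Vh.sub_mem huh hiVu
  obtain ⟨v, hv, w, hw, hLvw, hbound⟩ := hinfsup e heVh zh hzh
  have hL0w : L ((0 : V), w) ≤ 1 := le_trans (hL₂ v w) hLvw
  have hLnn : (0 : ℝ) ≤ L ((0 : V), w) := apply_nonneg L _
  have hLvwnn : (0 : ℝ) ≤ L (v, w) := apply_nonneg L _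
  have hsq1 : Real.sqrt (sV (u - iVu) (u - iVu)) ≤ C₁ * ρ := hdom1
  have hsq1nn : (0 : ℝ) ≤ Real.sqrt (sV (u - iVu) (u - iVu)) := Real.sqrt_nonneg _
  have hsq2 : Real.sqrt (sV v v) ≤ C₁ * L (v, w) := hdom2 v hv w hw
  have hsq2' : Real.sqrt (sV v v) ≤ C₁ := by nlinarith
  have hsq2nn : (0 : ℝ) ≤ Real.sqrt (sV v v) := Real.sqrt_nonneg _
  have hhpow : (0 : ℝ) < h ^ (-κ) := Real.rpow_pos_of_pos hh _
  have hhpow2 : (0 : ℝ) ≤ h ^ ((1 : ℝ) / 2) := (Real.rpow_pos_of_pos hh _).le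
  -- rewrite the two pairings
  have hA : ah e w - sW zh w = ah (u - iVu) w + δl w := by
    have h1 := heq1 w hw
    simp only [he, map_sub, LinearMap.sub_apply]
    linarith
  have hB : ah v zh + sV e v = sV (u - iVu) v + δs v := by
    have h2 := heq2 v hv
    have hsubs : sV e v = sV uh v - sV iVu v := by
      simp only [he, map_sub, LinearMap.sub_apply]
    have hsubs2 : sV (u - iVu) v = sV u v - sV iVu v := by
      simp only [map_sub, LinearMap.sub_apply]
    linarith
  -- bound each piece
  have b1 : ah (u - iVu) w ≤ δ := by
    have h1 := hcont w hw
    have h2 : δ * L ((0 : V), w) ≤ δ * 1 := mul_le_mul_of_nonneg_left hL0w hδ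
    linarith
  have b2 : δl w ≤ Cκ * h ^ (-κ) * Dl := by
    have h1 := le_trans (le_abs_self _) (hδl w hw)
    have h2 : Dl * ‖w‖ ≤ Dl * (Cκ * h ^ (-κ) * L ((0 : V), w)) :=
      mul_le_mul_of_nonneg_left (hWnorm w hw) hDl
    have h3 : Dl * (Cκ * h ^ (-κ) * L ((0 : V), w)) ≤ Dl * (Cκ * h ^ (-κ) * 1) :=
      mul_le_mul_of_nonneg_left
        (mul_le_mul_of_nonneg_left hL0w (mul_nonneg hCκ hhpow.le)) hDl
    have h4 : Dl * (Cκ * h ^ (-κ) * 1) = Cκ * h ^ (-κ) * Dl := by ring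
    linarith
  have b3 : sV (u - iVu) v ≤ C₁ ^ 2 * ρ := by
    have h1 := csV (u - iVu) v
    have h0 : (0 : ℝ) ≤ C₁ * ρ := le_trans hsq1nn hsq1
    have h2 : Real.sqrt (sV (u - iVu) (u - iVu)) * Real.sqrt (sV v v) ≤
        (C₁ * ρ) * C₁ := mul_le_mul hsq1 hsq2' hsq2nn h0
    have h3 : (C₁ * ρ) * C₁ = C₁ ^ 2 * ρ := by ring
    linarith
  have b4 : δs v ≤ C₁ * h ^ ((1 : ℝ) / 2) * Dψ := by
    have h1 := le_trans (le_abs_self _) (hδs v hv)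
    have h2 : h ^ ((1 : ℝ) / 2) * Dψ * Real.sqrt (sV v v) ≤
        h ^ ((1 : ℝ) / 2) * Dψ * C₁ := by
      exact mul_le_mul_of_nonneg_left hsq2' (mul_nonneg hhpow2 hDψ)
    have h3 : h ^ ((1 : ℝ) / 2) * Dψ * C₁ = C₁ * h ^ ((1 : ℝ) / 2) * Dψ := by ring
    linarith
  have key : cs * L (e, zh) ≤ δ + C₁ ^ 2 * ρ + Cκ * h ^ (-κ) * Dl +
      C₁ * h ^ ((1 : ℝ) / 2) * Dψ := by
    calc cs * L (e, zh) ≤ ah e w - sW zh w + ah v zh + sV e v := hbound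
      _ = (ah (u - iVu) w + δl w) + (sV (u - iVu) v + δs v) := by
          rw [add_assoc, hA, hB]
      _ ≤ δ + C₁ ^ 2 * ρ + Cκ * h ^ (-κ) * Dl + C₁ * h ^ ((1 : ℝ) / 2) * Dψ := by
          linarith
  have hLe : L (e, zh) ≤ cs⁻¹ * (δ + C₁ ^ 2 * ρ + Cκ * h ^ (-κ) * Dl +
      C₁ * h ^ ((1 : ℝ) / 2) * Dψ) := by
    rw [inv_mul_eq_div, le_div_iff₀ hcs]
    linarith [key]
  have htri : L (uh - u, zh) ≤ ρ + L (e, zh) := by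
    have hsplit : (uh - u, zh) = (iVu - u, (0 : W)) + (e, zh) := by
      simp [he, Prod.ext_iff]
    have hneg : L (iVu - u, (0 : W)) = L (u - iVu, (0 : W)) := by
      have : (iVu - u, (0 : W)) = -(u - iVu, (0 : W)) := by
        simp [Prod.ext_iff]
      rw [this, map_neg_eq_map]
    calc L (uh - u, zh) ≤ L (iVu - u, (0 : W)) + L (e, zh) := by
          rw [hsplit]; exact map_add_le_add L _ _
      _ = ρ + L (e, zh) := by rw [hneg, hρ]
  linarith
end

section
/- Let l : W → ℝ be linear and let u ∈ V₀ satisfy a(u, w) = l(w) for all w ∈ W. Let (u_h, z_h) ∈ V_h × W_h satisfy a_h(u_h, w) − s_W(z_h, w) = l_h(w) for all w ∈ W_h, where l_h := l + δl with δl : W → ℝ linear and |δl(w)| ≤ D_l·‖w‖_W for all w ∈ W. Let i_W : W → W be a linear map with i_W w ∈ W_h, ‖i_W w‖_W ≤ C_W·‖w‖_W and |i_W w|_{s_W} ≤ C_W·‖w‖_W for all w ∈ W. Let r_V u_h ∈ V₀ be given, and set ẽ := u − r_V u_h and e_h := r_V u_h − u_h. Assume there are K₁, K₂, K₃, K₄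 ≥ 0 and η_V ≥ 0 such that for all w ∈ W: |a(u − u_h, w − i_W w)| ≤ K₁·η_V·‖w‖_W, |a_h(u_h, i_W w) − a(u_h, i_W w)| ≤ K₂·η_V·‖w‖_W, |a(e_h, w)| ≤ K₃·η_V·‖w‖_W; and assume ‖ẽ‖_C ≤ E and ‖e_h‖_S ≤ K₄·η_V. Set η_δ := η_V + |z_h|_{s_W} + D_l and c_{δ,a} := K₁ + K₂ + K₃ + C_W. If c_{δ,a}·η_δ < 1, then the perturbed a posteriori error estimate ‖u − u_h‖_S ≤ Ξ(c_{δ,a}·η_δ) + K₄·η_V holds. -/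
/-- Perturbed a posteriori error estimate using conditional stability
(Theorem 2 of the paper, abstract form): with perturbed data `l_h = l + δl`,
`‖u − u_h‖_S ≤ Ξ(c_{δ,a}·η_δ) + K₄·η_V` where
`η_δ := η_V + |z_h|_{s_W} + D_l` and `c_{δ,a} := K₁ + K₂ + K₃ + C_W`. -/
theorem perturbed_aposteriori_error_estimate
    {V W : Type*} [NormedAddCommGroup V] [NormedSpace ℝ V]
    [NormedAddCommGroup W] [NormedSpace ℝ W]
    (Vh : Submodule ℝ V) (Wh : Submodule ℝ W) (V₀ : Submodule ℝ V)
    (a : V →ₗ[ℝ] W →ₗ[ℝ] ℝ) (ah : V →ₗ[ℝ] W →ₗ[ℝ] ℝ)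
    (sW : W →ₗ[ℝ] W →ₗ[ℝ] ℝ)
    (hsWsymm : ∀ w₁ w₂ : W, sW w₁ w₂ = sW w₂ w₁)
    (hsWpos : ∀ w : W, 0 ≤ sW w w)
    -- conditional stability in the seminorms S and C
    (S C : Seminorm ℝ V) (E : ℝ) (hE : 0 ≤ E) (Ξ : ℝ → ℝ)
    (hstab : ∀ x ∈ V₀, C x ≤ E → ∀ ε : ℝ, 0 ≤ ε → ε < 1 →
      (∀ w : W, |a x w| ≤ ε * ‖w‖) → S x ≤ Ξ ε)
    -- data and its perturbation
    (l δl : W →ₗ[ℝ] ℝ) (lh : W →ₗ[ℝ] ℝ)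
    (hlh : ∀ w : W, lh w = l w + δl w)
    (Dl : ℝ) (hDl : 0 ≤ Dl) (hδl : ∀ w : W, |δl w| ≤ Dl * ‖w‖)
    (u : V) (hu₀ : u ∈ V₀) (hu : ∀ w : W, a u w = l w)
    (uh : V) (zh : W) (huh : uh ∈ Vh) (hzh : zh ∈ Wh)
    (heq1 : ∀ w ∈ Wh, ah uh w - sW zh w = lh w)
    -- the interpolation operator iW
    (iW : W →ₗ[ℝ] W) (hiW : ∀ w : W, iW w ∈ Wh)
    (CW : ℝ) (hCW : 0 ≤ CW)
    (hiWnorm : ∀ w : W, ‖iW w‖ ≤ CW * ‖w‖)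
    (hiWsW : ∀ w : W, Real.sqrt (sW (iW w) (iW w)) ≤ CW * ‖w‖)
    (rVuh : V) (hrVuh : rVuh ∈ V₀)
    -- Strang-term bounds
    (K₁ K₂ K₃ K₄ : ℝ) (hK₁ : 0 ≤ K₁) (hK₂ : 0 ≤ K₂) (hK₃ : 0 ≤ K₃)
    (hK₄ : 0 ≤ K₄)
    (ηV : ℝ) (hηV : 0 ≤ ηV)
    (hb1 : ∀ w : W, |a (u - uh) (w - iW w)| ≤ K₁ * ηV * ‖w‖)
    (hb2 : ∀ w : W, |ah uh (iW w) - a uh (iW w)| ≤ K₂ * ηV * ‖w‖)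
    (hb3 : ∀ w : W, |a (rVuh - uh) w| ≤ K₃ * ηV * ‖w‖)
    -- stability condition and conforming error bounds
    (hcond : C (u - rVuh) ≤ E)
    (heh : S (rVuh - uh) ≤ K₄ * ηV)
    -- smallness of the perturbed a posteriori quantity
    (hsmall :
      (K₁ + K₂ + K₃ + CW) * (ηV + Real.sqrt (sW zh zh) + Dl) < 1) :
    S (u - uh) ≤
      Ξ ((K₁ + K₂ + K₃ + CW) * (ηV + Real.sqrt (sW zh zh) + Dl)) +
        K₄ * ηV := by
  set s0 := Real.sqrt (sW zh zh) with hs0_def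
  set ε := (K₁ + K₂ + K₃ + CW) * (ηV + s0 + Dl) with hε_def
  have hsqrt : 0 ≤ s0 := Real.sqrt_nonneg _
  have hεnn : 0 ≤ ε := by positivity
  have hbound : ∀ w : W, |a (u - rVuh) w| ≤ ε * ‖w‖ := by
    intro w
    have hnn : 0 ≤ ‖w‖ := norm_nonneg w
    have hdecomp : a (u - rVuh) w = a (u - uh) (w - iW w)
        + (-(δl (iW w)) - sW zh (iW w) + (ah uh (iW w) - a uh (iW w)))
        - a (rVuh - uh) w := by
      have h1 : ah uh (iW w) - sW zh (iW w) = lh (iW w) := heq1 _ (hiW w)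
      have h2 : a u (iW w) = l (iW w) := hu (iW w)
      have h3 : lh (iW w) = l (iW w) + δl (iW w) := hlh (iW w)
      simp only [map_sub, LinearMap.sub_apply] at *
      linarith
    have bδ : |δl (iW w)| ≤ Dl * (CW * ‖w‖) :=
      le_trans (hδl (iW w)) (by nlinarith [hiWnorm w, norm_nonneg (iW w)])
    have bs : |sW zh (iW w)| ≤ s0 * (CW * ‖w‖) := by
      refine le_trans (cs_psd sW hsWsymm hsWpos zh (iW w)) ?_
      have := hiWsW w
      nlinarith [Real.sqrt_nonneg ((sW (iW w)) (iW w))]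
    have e1 := abs_le.mp (hb1 w)
    have e2 := abs_le.mp (hb2 w)
    have e3 := abs_le.mp (hb3 w)
    have e4 := abs_le.mp bδ
    have e5 := abs_le.mp bs
    have hsum : K₁ * ηV * ‖w‖ + K₂ * ηV * ‖w‖ + K₃ * ηV * ‖w‖
        + Dl * (CW * ‖w‖) + s0 * (CW * ‖w‖) ≤ ε * ‖w‖ := by
      rw [hε_def]
      nlinarith [mul_nonneg (mul_nonneg hK₁ hsqrt) hnn,
        mul_nonneg (mul_nonneg hK₁ hDl) hnn,
        mul_nonneg (mul_nonneg hK₂ hsqrt) hnn,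
        mul_nonneg (mul_nonneg hK₂ hDl) hnn,
        mul_nonneg (mul_nonneg hK₃ hsqrt) hnn,
        mul_nonneg (mul_nonneg hK₃ hDl) hnn,
        mul_nonneg (mul_nonneg hCW hηV) hnn]
    rw [abs_le]
    constructor <;> (rw [hdecomp]; linarith)
  have het₀ : u - rVuh ∈ V₀ := Submodule.sub_mem V₀ hu₀ hrVuh
  have hS : S (u - rVuh) ≤ Ξ ε := hstab _ het₀ hcond ε hεnn hsmall hbound
  have hsplit : u - uh = (u - rVuh) + (rVuh - uh) := by abel
  calc S (u - uh) = S ((u - rVuh) + (rVuh - uh)) := by rw [hsplit]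
    _ ≤ S (u - rVuh) + S (rVuh - uh) := map_add_le_add S _ _
    _ ≤ Ξ ε + K₄ * ηV := add_le_add hS heh
end

section
/- Under the hypotheses of the perturbed stabilisation-norm convergence lemma (the perturbed discrete system for (u_h, z_h) ∈ V_h × W_h with exact solution u ∈ V, interpolant i_V u ∈ V_h, ρ := |(u − i_V u, 0)|_L, inf-sup constant c_s > 0, continuity constant δ ≥ 0, domination constant C₁ ≥ 0, and perturbation bounds with constants D_l, D_ψ, C_κ ≥ 0, κ ≥ 0, h > 0), assume additionally: δ + ρ ≤ C_V·h for some C_V ≥ 0 (first-order approximability); h > h_min for some h_min > 0; the perturbation-size condition C_κ·h_min^{−κ}·D_l + C₁·h^{1/2}·D_ψ ≤ C_δ·h for some C_δ ≥ 0; the discrete stability of the C-seminorm ‖v‖_C ≤ C_P·h^{−1}·|(v, 0)|_L for all v ∈ V_h, where ‖·‖_C is a seminorm on V and C_P ≥ 0; and ‖i_V u‖_C ≤ C₀. Then the discrete solution satisfies the h-independent a priori bound ‖u_h‖_C ≤ C₀ + C_P·c_s^{-1}·(max(1, C₁²)·C_V + C_δ). -/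
private lemma bilin_cauchy_schwarz {V : Type*} [AddCommGroup V] [Module ℝ V]
    (sV : V →ₗ[ℝ] V →ₗ[ℝ] ℝ)
    (hsymm : ∀ v₁ v₂ : V, sV v₁ v₂ = sV v₂ v₁)
    (hpos : ∀ v : V, 0 ≤ sV v v) (x y : V) :
    sV x y ≤ Real.sqrt (sV x x) * Real.sqrt (sV y y) := by
  have key : discrim (sV y y) (2 * sV x y) (sV x x) ≤ 0 := by
    apply discrim_le_zero
    intro t
    have := hpos (t • y + x)
    simp only [map_add, map_smul, LinearMap.add_apply, LinearMap.smul_apply,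
      smul_eq_mul] at this
    have hxy := hsymm x y
    have expand : sV y y * (t * t) + 2 * sV x y * t + sV x x
        = t * (t * sV y y + sV x y) + (t * sV y x + sV x x) := by
      rw [hxy]; ring
    linarith [this, expand.le, expand.ge]
  rw [discrim] at key
  have hsq : (sV x y) ^ 2 ≤ sV x x * sV y y := by nlinarith
  calc sV x y ≤ |sV x y| := le_abs_self _
    _ = Real.sqrt ((sV x y) ^ 2) := (Real.sqrt_sq_eq_abs _).symm
    _ ≤ Real.sqrt (sV x x * sV y y) := Real.sqrt_le_sqrt hsq
    _ = Real.sqrt (sV x x) * Real.sqrt (sV y y) := Real.sqrt_mul (hpos x) _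

set_option maxHeartbeats 1000000 in
/-- Uniform a priori bound on the discrete solution in the `C`-seminorm
(Corollary 2 of the paper, abstract form): under first-order approximability,
a lower mesh-size bound `h > h_min`, a perturbation-size condition, and the
discrete stability of the `C`-seminorm, the discrete solution satisfies an
`h`-independent bound `‖u_h‖_C ≤ C₀ + C_P cs⁻¹ (max 1 C₁² · C_V + C_δ)`. -/
theorem uniform_bound_discrete_solution
    {V W : Type*} [NormedAddCommGroup V] [NormedSpace ℝ V]
    [NormedAddCommGroup W] [NormedSpace ℝ W]
    (Vh : Submodule ℝ V) (Wh : Submodule ℝ W)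
    (ah : V →ₗ[ℝ] W →ₗ[ℝ] ℝ)
    (sV : V →ₗ[ℝ] V →ₗ[ℝ] ℝ) (sW : W →ₗ[ℝ] W →ₗ[ℝ] ℝ)
    (hsVsymm : ∀ v₁ v₂ : V, sV v₁ v₂ = sV v₂ v₁)
    (hsVpos : ∀ v : V, 0 ≤ sV v v)
    (hsWsymm : ∀ w₁ w₂ : W, sW w₁ w₂ = sW w₂ w₁)
    (hsWpos : ∀ w : W, 0 ≤ sW w w)
    (L : Seminorm ℝ (V × W))
    (hL₁ : ∀ (v : V) (w : W), L (v, (0 : W)) ≤ L (v, w))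
    (hL₂ : ∀ (v : V) (w : W), L ((0 : V), w) ≤ L (v, w))
    -- data perturbations
    (δl : W →ₗ[ℝ] ℝ) (δs : V →ₗ[ℝ] ℝ)
    (u : V) (uh : V) (zh : W) (huh : uh ∈ Vh) (hzh : zh ∈ Wh)
    -- the perturbed discrete system
    (heq1 : ∀ w ∈ Wh, ah uh w - sW zh w = ah u w + δl w)
    (heq2 : ∀ v ∈ Vh, ah v zh + sV uh v = sV u v + δs v)
    (iVu : V) (hiVu : iVu ∈ Vh)
    (ρ : ℝ) (hρ : ρ = L (u - iVu, (0 : W)))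
    -- inf-sup stability
    (cs : ℝ) (hcs : 0 < cs)
    (hinfsup : ∀ ν ∈ Vh, ∀ ζ ∈ Wh, ∃ v ∈ Vh, ∃ w ∈ Wh,
      L (v, w) ≤ 1 ∧ cs * L (ν, ζ) ≤ ah ν w - sW ζ w + ah v ζ + sV ν v)
    -- continuity
    (δ : ℝ) (hδ : 0 ≤ δ)
    (hcont : ∀ w ∈ Wh, ah (u - iVu) w ≤ δ * L ((0 : V), w))
    -- domination
    (C₁ : ℝ) (hC₁ : 0 ≤ C₁)
    (hdom1 : Real.sqrt (sV (u - iVu) (u - iVu)) ≤ C₁ * ρ)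
    (hdom2 : ∀ v ∈ Vh, ∀ w ∈ Wh, Real.sqrt (sV v v) ≤ C₁ * L (v, w))
    -- perturbation bounds
    (Dl Dψ Cκ κ h : ℝ) (hDl : 0 ≤ Dl) (hDψ : 0 ≤ Dψ) (hCκ : 0 ≤ Cκ)
    (hκ : 0 ≤ κ) (hh : 0 < h)
    (hδl : ∀ w ∈ Wh, |δl w| ≤ Dl * ‖w‖)
    (hWnorm : ∀ w ∈ Wh, ‖w‖ ≤ Cκ * h ^ (-κ) * L ((0 : V), w))
    (hδs : ∀ v ∈ Vh, |δs v| ≤ h ^ ((1 : ℝ) / 2) * Dψ * Real.sqrt (sV v v))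
    -- first-order approximability
    (CV : ℝ) (hCV : 0 ≤ CV) (happrox : δ + ρ ≤ CV * h)
    -- lower mesh-size bound
    (hmin : ℝ) (hhmin : 0 < hmin) (hhgt : hmin < h)
    -- perturbation-size condition
    (Cδ : ℝ) (hCδ : 0 ≤ Cδ)
    (hpertsize : Cκ * hmin ^ (-κ) * Dl + C₁ * h ^ ((1 : ℝ) / 2) * Dψ ≤ Cδ * h)
    -- discrete stability of the C-seminorm
    (Cn : Seminorm ℝ V) (CP : ℝ) (hCP : 0 ≤ CP)
    (hCstab : ∀ v ∈ Vh, Cn v ≤ CP * h⁻¹ * L (v, (0 : W)))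
    (C₀ : ℝ) (hC₀ : Cn iVu ≤ C₀) :
    Cn uh ≤ C₀ + CP * cs⁻¹ * (max 1 (C₁ ^ 2) * CV + Cδ) := by

  -- basic nonnegativity facts
  have hρ0 : 0 ≤ ρ := hρ ▸ apply_nonneg L _
  have hmax1 : (1 : ℝ) ≤ max 1 (C₁ ^ 2) := le_max_left _ _
  have hmax2 : C₁ ^ 2 ≤ max 1 (C₁ ^ 2) := le_max_right _ _
  -- inf-sup applied to (uh - iVu, zh)
  have hν : uh - iVu ∈ Vh := Vh.sub_mem huh hiVu
  obtain ⟨v, hv, w, hw, hLvw, hA⟩ := hinfsup (uh - iVu) hν zh hzh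
  have hLvw0 : L ((0 : V), w) ≤ 1 := le_trans (hL₂ v w) hLvw
  have hLvw0' : L (v, (0 : W)) ≤ 1 := le_trans (hL₁ v w) hLvw
  -- rewrite the bilinear form using the perturbed equations
  have h1 := heq1 w hw
  have h2 := heq2 v hv
  have hAeq : ah (uh - iVu) w - sW zh w + ah v zh + sV (uh - iVu) v
      = ah (u - iVu) w + δl w + sV (u - iVu) v + δs v := by
    simp only [map_sub, LinearMap.sub_apply]
    have hs1 : sV (u - iVu) v = sV u v - sV iVu v := by simp [map_sub]
    have hs2 : sV (uh - iVu) v = sV uh v - sV iVu v := by simp [map_sub]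
    linarith
  rw [hAeq] at hA
  -- bound each term
  have t1 : ah (u - iVu) w ≤ δ := by
    calc ah (u - iVu) w ≤ δ * L ((0 : V), w) := hcont w hw
      _ ≤ δ * 1 := mul_le_mul_of_nonneg_left hLvw0 hδ
      _ = δ := mul_one δ
  have hκ' : (0 : ℝ) ≤ Cκ * hmin ^ (-κ) * Dl := by
    have : (0:ℝ) ≤ hmin ^ (-κ) := Real.rpow_nonneg hhmin.le _
    positivity
  have hrpow : h ^ (-κ) ≤ hmin ^ (-κ) :=
    Real.rpow_le_rpow_of_nonpos hhmin hhgt.le (neg_nonpos.mpr hκ)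
  have t2 : δl w ≤ Cκ * hmin ^ (-κ) * Dl := by
    have hb := (le_abs_self _).trans (hδl w hw)
    have hn := hWnorm w hw
    have hL0 : 0 ≤ L ((0 : V), w) := apply_nonneg L _
    have hrp0 : (0:ℝ) ≤ h ^ (-κ) := Real.rpow_nonneg hh.le _
    have hmrp0 : (0:ℝ) ≤ hmin ^ (-κ) := Real.rpow_nonneg hhmin.le _
    have h3 : ‖w‖ ≤ Cκ * hmin ^ (-κ) * 1 := by
      have h1 : Cκ * h ^ (-κ) * L ((0 : V), w) ≤ Cκ * hmin ^ (-κ) * 1 :=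
        mul_le_mul (mul_le_mul_of_nonneg_left hrpow hCκ) hLvw0 hL0
          (mul_nonneg hCκ hmrp0)
      linarith
    calc δl w ≤ Dl * ‖w‖ := hb
      _ ≤ Dl * (Cκ * hmin ^ (-κ) * 1) := mul_le_mul_of_nonneg_left h3 hDl
      _ = Cκ * hmin ^ (-κ) * Dl := by ring
  have hsvv : Real.sqrt (sV v v) ≤ C₁ := by
    calc Real.sqrt (sV v v) ≤ C₁ * L (v, w) := hdom2 v hv w hw
      _ ≤ C₁ * 1 := mul_le_mul_of_nonneg_left hLvw hC₁
      _ = C₁ := mul_one _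
  have t3 : sV (u - iVu) v ≤ C₁ ^ 2 * ρ := by
    have hcsch := bilin_cauchy_schwarz sV hsVsymm hsVpos (u - iVu) v
    have hs2 : (0:ℝ) ≤ Real.sqrt (sV v v) := Real.sqrt_nonneg _
    calc sV (u - iVu) v
        ≤ Real.sqrt (sV (u - iVu) (u - iVu)) * Real.sqrt (sV v v) := hcsch
      _ ≤ (C₁ * ρ) * C₁ := mul_le_mul hdom1 hsvv hs2 (mul_nonneg hC₁ hρ0)
      _ = C₁ ^ 2 * ρ := by ring
  have t4 : δs v ≤ C₁ * h ^ ((1:ℝ)/2) * Dψ := by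
    have hb := (le_abs_self _).trans (hδs v hv)
    have hrp0 : (0:ℝ) ≤ h ^ ((1:ℝ)/2) := Real.rpow_nonneg hh.le _
    calc δs v ≤ h ^ ((1:ℝ)/2) * Dψ * Real.sqrt (sV v v) := hb
      _ ≤ h ^ ((1:ℝ)/2) * Dψ * C₁ :=
          mul_le_mul_of_nonneg_left hsvv (mul_nonneg hrp0 hDψ)
      _ = C₁ * h ^ ((1:ℝ)/2) * Dψ := by ring
  -- combine
  have hmainbound : cs * L (uh - iVu, zh) ≤ (max 1 (C₁ ^ 2) * CV + Cδ) * h := by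
    have hcomb : cs * L (uh - iVu, zh)
        ≤ δ + C₁ ^ 2 * ρ + (Cκ * hmin ^ (-κ) * Dl + C₁ * h ^ ((1:ℝ)/2) * Dψ) := by
      linarith
    have h5 : δ + C₁ ^ 2 * ρ ≤ max 1 (C₁ ^ 2) * (δ + ρ) := by
      have ha : δ ≤ max 1 (C₁ ^ 2) * δ := le_mul_of_one_le_left hδ hmax1
      have hb' : C₁ ^ 2 * ρ ≤ max 1 (C₁ ^ 2) * ρ :=
        mul_le_mul_of_nonneg_right hmax2 hρ0
      calc δ + C₁ ^ 2 * ρ ≤ max 1 (C₁ ^ 2) * δ + max 1 (C₁ ^ 2) * ρ := add_le_add ha hb'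
        _ = max 1 (C₁ ^ 2) * (δ + ρ) := by ring
    have h6 : max 1 (C₁ ^ 2) * (δ + ρ) ≤ max 1 (C₁ ^ 2) * (CV * h) := by
      apply mul_le_mul_of_nonneg_left happrox; linarith
    calc cs * L (uh - iVu, zh)
        ≤ max 1 (C₁ ^ 2) * (CV * h) + Cδ * h := by linarith
      _ = (max 1 (C₁ ^ 2) * CV + Cδ) * h := by ring
  have hLbound : L (uh - iVu, zh) ≤ cs⁻¹ * ((max 1 (C₁ ^ 2) * CV + Cδ) * h) := by
    have := mul_le_mul_of_nonneg_left hmainbound (inv_nonneg.mpr hcs.le)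
    rwa [← mul_assoc, inv_mul_cancel₀ hcs.ne', one_mul] at this
  -- final bound
  have hstep : Cn (uh - iVu) ≤ CP * cs⁻¹ * (max 1 (C₁ ^ 2) * CV + Cδ) := by
    have h1 := hCstab (uh - iVu) hν
    have h2 : L (uh - iVu, (0 : W)) ≤ cs⁻¹ * ((max 1 (C₁ ^ 2) * CV + Cδ) * h) :=
      le_trans (hL₁ _ _) hLbound
    have hinv : (0:ℝ) < h⁻¹ := inv_pos.mpr hh
    calc Cn (uh - iVu) ≤ CP * h⁻¹ * L (uh - iVu, (0 : W)) := h1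
      _ ≤ CP * h⁻¹ * (cs⁻¹ * ((max 1 (C₁ ^ 2) * CV + Cδ) * h)) := by
          apply mul_le_mul_of_nonneg_left h2
          exact mul_nonneg hCP hinv.le
      _ = CP * cs⁻¹ * (max 1 (C₁ ^ 2) * CV + Cδ) * (h⁻¹ * h) := by ring
      _ = CP * cs⁻¹ * (max 1 (C₁ ^ 2) * CV + Cδ) := by
          rw [inv_mul_cancel₀ hh.ne', mul_one]
  calc Cn uh = Cn (iVu + (uh - iVu)) := by congr 1; abel
    _ ≤ Cn iVu + Cn (uh - iVu) := map_add_le_add Cn _ _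
    _ ≤ C₀ + CP * cs⁻¹ * (max 1 (C₁ ^ 2) * CV + Cδ) := add_le_add hC₀ hstep
end

section
/- Under the hypotheses of the perturbed stabilisation-norm convergence lemma (the perturbed discrete system for (u_h, z_h) ∈ V_h × W_h with exact solution u ∈ V, interpolant i_V u ∈ V_h, ρ := |(u − i_V u, 0)|_L, inf-sup constant c_s > 0, continuity constant δ ≥ 0, domination constant C₁ ≥ 0, and perturbation bounds with constants D_l, D_ψ, C_κ ≥ 0, κ ≥ 0, h > 0), assume additionally that η_V ≥ 0 satisfies η_V ≤ C₂·|(u_h − u, 0)|_L for some C₂ ≥ 0 and that |z_h|_{s_W} ≤ C₁·|(0, z_h)|_L. Then the perturbed a posteriori quantity η_δ := η_V + |z_h|_{s_W} + D_l satisfies the a priori bound η_δ ≤ (C₁ + C₂)·(ρ + c_s^{-1}·(δ + C₁²·ρ + C_κ·h^{−κ}·D_l + C₁·h^{1/2}·D_ψ)) + D_l. -/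
lemma psd_cauchy_schwarz {V : Type*} [AddCommGroup V] [Module ℝ V]
    (B : V →ₗ[ℝ] V →ₗ[ℝ] ℝ) (hsymm : ∀ x y, B x y = B y x)
    (hpos : ∀ x, 0 ≤ B x x) (x y : V) :
    B x y ≤ Real.sqrt (B x x) * Real.sqrt (B y y) := by
  have hd : discrim (B y y) (2 * B x y) (B x x) ≤ 0 := by
    apply discrim_le_zero
    intro t
    have := hpos (x + t • y)
    simp only [map_add, map_smul, LinearMap.add_apply, LinearMap.smul_apply,
      smul_eq_mul] at this
    rw [hsymm y x] at this; nlinarith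
  rw [discrim] at hd
  have hsq : (B x y) ^ 2 ≤ B x x * B y y := by nlinarith
  calc B x y ≤ |B x y| := le_abs_self _
    _ = Real.sqrt ((B x y) ^ 2) := (Real.sqrt_sq_eq_abs _).symm
    _ ≤ Real.sqrt (B x x * B y y) := Real.sqrt_le_sqrt hsq
    _ = Real.sqrt (B x x) * Real.sqrt (B y y) :=
        Real.sqrt_mul (hpos x) _

set_option maxHeartbeats 1600000 in
/-- A priori bound for the perturbed a posteriori quantity
`η_δ = η_V + |z_h|_{s_W} + D_l` (equation (34) of the paper, abstract form). -/
theorem perturbed_apriori_bound_for_aposteriori_quantity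
    {V W : Type*} [NormedAddCommGroup V] [NormedSpace ℝ V]
    [NormedAddCommGroup W] [NormedSpace ℝ W]
    (Vh : Submodule ℝ V) (Wh : Submodule ℝ W)
    (ah : V →ₗ[ℝ] W →ₗ[ℝ] ℝ)
    (sV : V →ₗ[ℝ] V →ₗ[ℝ] ℝ) (sW : W →ₗ[ℝ] W →ₗ[ℝ] ℝ)
    (hsVsymm : ∀ v₁ v₂ : V, sV v₁ v₂ = sV v₂ v₁)
    (hsVpos : ∀ v : V, 0 ≤ sV v v)
    (hsWsymm : ∀ w₁ w₂ : W, sW w₁ w₂ = sW w₂ w₁)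
    (hsWpos : ∀ w : W, 0 ≤ sW w w)
    (L : Seminorm ℝ (V × W))
    (hL₁ : ∀ (v : V) (w : W), L (v, (0 : W)) ≤ L (v, w))
    (hL₂ : ∀ (v : V) (w : W), L ((0 : V), w) ≤ L (v, w))
    -- data perturbations
    (δl : W →ₗ[ℝ] ℝ) (δs : V →ₗ[ℝ] ℝ)
    (u : V) (uh : V) (zh : W) (huh : uh ∈ Vh) (hzh : zh ∈ Wh)
    -- the perturbed discrete system
    (heq1 : ∀ w ∈ Wh, ah uh w - sW zh w = ah u w + δl w)
    (heq2 : ∀ v ∈ Vh, ah v zh + sV uh v = sV u v + δs v)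
    (iVu : V) (hiVu : iVu ∈ Vh)
    (ρ : ℝ) (hρ : ρ = L (u - iVu, (0 : W)))
    -- inf-sup stability
    (cs : ℝ) (hcs : 0 < cs)
    (hinfsup : ∀ ν ∈ Vh, ∀ ζ ∈ Wh, ∃ v ∈ Vh, ∃ w ∈ Wh,
      L (v, w) ≤ 1 ∧ cs * L (ν, ζ) ≤ ah ν w - sW ζ w + ah v ζ + sV ν v)
    -- continuity
    (δ : ℝ) (hδ : 0 ≤ δ)
    (hcont : ∀ w ∈ Wh, ah (u - iVu) w ≤ δ * L ((0 : V), w))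
    -- domination
    (C₁ : ℝ) (hC₁ : 0 ≤ C₁)
    (hdom1 : Real.sqrt (sV (u - iVu) (u - iVu)) ≤ C₁ * ρ)
    (hdom2 : ∀ v ∈ Vh, ∀ w ∈ Wh, Real.sqrt (sV v v) ≤ C₁ * L (v, w))
    (hdom3 : Real.sqrt (sW zh zh) ≤ C₁ * L ((0 : V), zh))
    -- perturbation bounds
    (Dl Dψ Cκ κ h : ℝ) (hDl : 0 ≤ Dl) (hDψ : 0 ≤ Dψ) (hCκ : 0 ≤ Cκ)
    (hκ : 0 ≤ κ) (hh : 0 < h)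
    (hδl : ∀ w ∈ Wh, |δl w| ≤ Dl * ‖w‖)
    (hWnorm : ∀ w ∈ Wh, ‖w‖ ≤ Cκ * h ^ (-κ) * L ((0 : V), w))
    (hδs : ∀ v ∈ Vh, |δs v| ≤ h ^ ((1 : ℝ) / 2) * Dψ * Real.sqrt (sV v v))
    -- the a posteriori quantity is dominated by the error in the L-seminorm
    (ηV : ℝ) (hηV : 0 ≤ ηV)
    (C₂ : ℝ) (hC₂ : 0 ≤ C₂)
    (hηVbound : ηV ≤ C₂ * L (uh - u, (0 : W))) :
    ηV + Real.sqrt (sW zh zh) + Dl ≤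
      (C₁ + C₂) * (ρ + cs⁻¹ * (δ + C₁ ^ 2 * ρ + Cκ * h ^ (-κ) * Dl +
        C₁ * h ^ ((1 : ℝ) / 2) * Dψ)) + Dl := by
  set ν := uh - iVu with hν
  have hνVh : ν ∈ Vh := Vh.sub_mem huh hiVu
  obtain ⟨v, hv, w, hw, hLvw, hA⟩ := hinfsup ν hνVh zh hzh
  have hρ0 : 0 ≤ ρ := hρ ▸ apply_nonneg L _
  have hLvw0 : 0 ≤ L (v, w) := apply_nonneg L _
  have hpow : (0 : ℝ) ≤ h ^ (-κ) := (Real.rpow_pos_of_pos hh _).le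
  have hpow2 : (0 : ℝ) ≤ h ^ ((1 : ℝ) / 2) := (Real.rpow_pos_of_pos hh _).le
  -- first group: ah ν w - sW zh w = ah (u - iVu) w + δl w
  have e1 : ah ν w - sW zh w = ah (u - iVu) w + δl w := by
    have := heq1 w hw
    simp only [hν, map_sub, LinearMap.sub_apply] at *
    linarith
  have b1 : ah ν w - sW zh w ≤ δ + Cκ * h ^ (-κ) * Dl := by
    rw [e1]
    have h1 : ah (u - iVu) w ≤ δ * L ((0 : V), w) := hcont w hw
    have h2 : δl w ≤ Dl * ‖w‖ := (le_abs_self _).trans (hδl w hw)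
    have h3 : ‖w‖ ≤ Cκ * h ^ (-κ) * L ((0 : V), w) := hWnorm w hw
    have h4 : L ((0 : V), w) ≤ 1 := (hL₂ v w).trans hLvw
    have k1 := mul_le_mul_of_nonneg_left h3 hDl
    have k2 := mul_le_mul_of_nonneg_left h4 hδ
    have k3 := mul_le_mul_of_nonneg_left h4
      (mul_nonneg (mul_nonneg hCκ hpow) hDl)
    nlinarith [apply_nonneg L ((0 : V), w)]
  -- second group: ah v zh + sV ν v = sV (u - iVu) v + δs v
  have e2 : ah v zh + sV ν v = sV (u - iVu) v + δs v := by
    have := heq2 v hv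
    simp only [hν, map_sub, LinearMap.sub_apply] at *
    linarith
  have hsq0 : 0 ≤ Real.sqrt (sV v v) := Real.sqrt_nonneg _
  have hsqb : Real.sqrt (sV v v) ≤ C₁ * L (v, w) := hdom2 v hv w hw
  have b2 : ah v zh + sV ν v ≤ C₁ ^ 2 * ρ + C₁ * h ^ ((1 : ℝ) / 2) * Dψ := by
    rw [e2]
    have hcs2 : sV (u - iVu) v ≤
        Real.sqrt (sV (u - iVu) (u - iVu)) * Real.sqrt (sV v v) :=
      psd_cauchy_schwarz sV hsVsymm hsVpos _ _
    have h5 : δs v ≤ h ^ ((1 : ℝ) / 2) * Dψ * Real.sqrt (sV v v) :=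
      (le_abs_self _).trans (hδs v hv)
    have k1 : Real.sqrt (sV (u - iVu) (u - iVu)) * Real.sqrt (sV v v) ≤
        (C₁ * ρ) * (C₁ * L (v, w)) :=
      mul_le_mul hdom1 hsqb hsq0 (mul_nonneg hC₁ hρ0)
    have k2 := mul_le_mul_of_nonneg_left hLvw (mul_nonneg (mul_nonneg hC₁ hC₁) hρ0)
    have k3 := mul_le_mul_of_nonneg_left hsqb (mul_nonneg hpow2 hDψ)
    have k4 := mul_le_mul_of_nonneg_left hLvw
      (mul_nonneg (mul_nonneg hpow2 hDψ) hC₁)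
    nlinarith
  -- combine: stability bound
  set R := δ + C₁ ^ 2 * ρ + Cκ * h ^ (-κ) * Dl + C₁ * h ^ ((1 : ℝ) / 2) * Dψ with hR
  have hstab : L (ν, zh) ≤ cs⁻¹ * R := by
    rw [le_inv_mul_iff₀ hcs]
    calc cs * L (ν, zh) ≤ ah ν w - sW zh w + ah v zh + sV ν v := hA
      _ ≤ R := by rw [hR]; linarith
  -- final combination
  have hzb : Real.sqrt (sW zh zh) ≤ C₁ * L (ν, zh) :=
    hdom3.trans (by
      have := hL₂ ν zh
      exact mul_le_mul_of_nonneg_left this hC₁)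
  have htri : L (uh - u, (0 : W)) ≤ L (ν, (0 : W)) + ρ := by
    have : (uh - u, (0 : W)) = (ν, (0 : W)) - (u - iVu, (0 : W)) := by
      simp [hν, Prod.ext_iff]
    rw [this, hρ]
    exact map_sub_le_add L _ _
  have hL0 : L (ν, (0 : W)) ≤ L (ν, zh) := hL₁ ν zh
  have hηb : ηV ≤ C₂ * (L (ν, zh) + ρ) := by
    calc ηV ≤ C₂ * L (uh - u, (0 : W)) := hηVbound
      _ ≤ C₂ * (L (ν, zh) + ρ) := by
        apply mul_le_mul_of_nonneg_left _ hC₂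
        linarith
  have hLνzh0 : 0 ≤ L (ν, zh) := apply_nonneg L _
  have hR0 : 0 ≤ cs⁻¹ * R := hLνzh0.trans hstab
  have k1 := mul_le_mul_of_nonneg_left hstab (add_nonneg hC₁ hC₂)
  have k2 := mul_nonneg hC₁ hρ0
  linarith [k1, k2, hηb, hzb]
end
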